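/- Fix real numbers α, β and an integer 0 ≤ r ≤ N. Let W ∈ W_r, let c_0, …, c_{N−r} be real numbers, and set V = Σ_{j=0}^{N−r} c_j·A₊^{j}W. Then HBDO V = Σ_{j=0}^{N−r} d_j·A₊^{j}W, where for each 0 ≤ j ≤ N−r, d_j = (2(r+j)(α−N) + βN)·c_j + (2√((r+j)(r+j+1)) − β)·m(r,j)·c_{j+1} + (2√((r+j)(r+j−1)) − β)·c_{j−1}, with the conventions c_{−1} = 0 and c_{N−r+1} = 0. -/
import Mathlib


open Finset

/-- Outer adjacency operator on vertex functions of the Boolean hypercube `B_N`: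
`(A₊V)(S) = Σ_{s∈S} V(S∖{s})`. -/
def Aplus (N : ℕ) (V : Finset (Fin N) → ℝ) : Finset (Fin N) → ℝ :=
  fun S => ∑ s ∈ S, V (S.erase s)

/-- Inner adjacency operator: `(A₋V)(R) = Σ_{b∉R} V(R∪{b})`. -/
def Aminus (N : ℕ) (V : Finset (Fin N) → ℝ) : Finset (Fin N) → ℝ :=
  fun R => ∑ b ∈ Rᶜ, V (insert b R)

/-- Adjacency operator `A = A₊ + A₋`. -/
def Adj (N : ℕ) (V : Finset (Fin N) → ℝ) : Finset (Fin N) → ℝ :=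
  fun S => Aplus N V S + Aminus N V S

/-- Graph Laplacian `L = N·I − A`. -/
def Lap (N : ℕ) (V : Finset (Fin N) → ℝ) : Finset (Fin N) → ℝ :=
  fun S => (N : ℝ) * V S - Adj N V S

/-- Inner product `⟨V,U⟩ = Σ_S V(S)U(S)` on vertex functions. -/
def inner' (N : ℕ) (V U : Finset (Fin N) → ℝ) : ℝ :=
  ∑ S : Finset (Fin N), V S * U S

/-- `V` is supported on the Hamming sphere `Σ_r` (vanishes off sets of cardinality `r`). -/
def suppOn (N r : ℕ) (V : Finset (Fin N) → ℝ) : Prop :=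
  ∀ S : Finset (Fin N), S.card ≠ r → V S = 0

/-- Membership in `W_r`: supported on `Σ_r` and orthogonal to `A₊ℓ²(Σ_{r−1})`.
(For `r = 0` the orthogonality condition is vacuous, so `W_0 = ℓ²(Σ_0)`.) -/
def memW (N r : ℕ) (W : Finset (Fin N) → ℝ) : Prop :=
  suppOn N r W ∧
    ∀ U : Finset (Fin N) → ℝ, suppOn N (r - 1) U → inner' N W (Aplus N U) = 0

/-- `m(r,k) = Σ_{j=0}^{k} (N − 2(r+j))`. -/
def mcoef (N r k : ℕ) : ℝ :=
  ∑ j ∈ Finset.range (k + 1), ((N : ℝ) - 2 * ((r : ℝ) + (j : ℝ)))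

/-- Hadamard vector `H_S(R) = (−1)^{|R∩S|}`. -/
def Had (N : ℕ) (S R : Finset (Fin N)) : ℝ := (-1 : ℝ) ^ (R ∩ S).card

/-- Spatial truncation `Q_K`: restriction to the Hamming ball of radius `K`. -/
def QK (N K : ℕ) (V : Finset (Fin N) → ℝ) : Finset (Fin N) → ℝ :=
  fun S => if S.card ≤ K then V S else 0

/-- Spectral projection `P_K`: orthogonal projection onto `span{H_S : |S| ≤ K}`,
given by `P_K V = Σ_{|S|≤K} (⟨V,H_S⟩/2^N)·H_S`. -/
noncomputable def PK (N K : ℕ) (V : Finset (Fin N) → ℝ) : Finset (Fin N) → ℝ :=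
  fun R => ∑ S ∈ Finset.univ.filter (fun S : Finset (Fin N) => S.card ≤ K),
    (inner' N V (Had N S) / 2 ^ N) * Had N S R

/-- Diagonal operator `(TV)(R) = √(2|R|)·V(R)`. -/
noncomputable def Tdiag (N : ℕ) (V : Finset (Fin N) → ℝ) : Finset (Fin N) → ℝ :=
  fun R => Real.sqrt (2 * (R.card : ℝ)) * V R

/-- Boolean difference operator conjugated by the Hadamard transform:
`HBDO = T(αI − L)T + βL`. -/
noncomputable def HBDO (N : ℕ) (α β : ℝ) (V : Finset (Fin N) → ℝ) : Finset (Fin N) → ℝ :=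
  fun R => Tdiag N (fun S => α * Tdiag N V S - Lap N (Tdiag N V) S) R + β * Lap N V R

/-- Hadamard transform `(HV)(R) = Σ_S (−1)^{|R∩S|} V(S)`. -/
def Hmat (N : ℕ) (V : Finset (Fin N) → ℝ) : Finset (Fin N) → ℝ :=
  fun R => ∑ S : Finset (Fin N), Had N S R * V S

/-- Commutator `C = A₋A₊ − A₊A₋`. -/
def Cop (N : ℕ) (V : Finset (Fin N) → ℝ) : Finset (Fin N) → ℝ :=
  fun S => Aminus N (Aplus N V) S - Aplus N (Aminus N V) S

lemma card_le_N {N : ℕ} (S : Finset (Fin N)) : S.card ≤ N := by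
  simpa using Finset.card_le_univ S

lemma aplus_scale (N : ℕ) (a : ℝ) (U : Finset (Fin N) → ℝ) :
    Aplus N (fun S => a * U S) = fun S => a * Aplus N U S := by
  funext S; simp [Aplus, Finset.mul_sum]

lemma aminus_scale (N : ℕ) (a : ℝ) (U : Finset (Fin N) → ℝ) :
    Aminus N (fun S => a * U S) = fun S => a * Aminus N U S := by
  funext S; simp [Aminus, Finset.mul_sum]

lemma suppOn_aplus {N k : ℕ} {V : Finset (Fin N) → ℝ} (hV : suppOn N k V) :
    suppOn N (k+1) (Aplus N V) := by
  intro S hS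
  refine Finset.sum_eq_zero fun s hs => hV _ ?_
  rw [Finset.card_erase_of_mem hs]
  have : 1 ≤ S.card := Finset.card_pos.2 ⟨s, hs⟩
  omega

lemma suppOn_iter {N r : ℕ} {W : Finset (Fin N) → ℝ} (hW : suppOn N r W) (j : ℕ) :
    suppOn N (r + j) ((Aplus N)^[j] W) := by
  induction j with
  | zero => simpa using hW
  | succ k ih =>
      rw [Function.iterate_succ_apply']
      have h := suppOn_aplus ih
      rwa [Nat.add_succ]

lemma iter_vanish {N r : ℕ} {W : Finset (Fin N) → ℝ} (hW : suppOn N r W) {j : ℕ}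
    (hj : N < r + j) (S : Finset (Fin N)) : (Aplus N)^[j] W S = 0 := by
  refine suppOn_iter hW j S ?_
  have := card_le_N S
  omega

lemma cop_pointwise (N : ℕ) (V : Finset (Fin N) → ℝ) (S : Finset (Fin N)) :
    Aminus N (Aplus N V) S = Aplus N (Aminus N V) S + ((N : ℝ) - 2 * S.card) * V S := by
  have hL : Aminus N (Aplus N V) S
      = ∑ b ∈ Sᶜ, (V S + ∑ s ∈ S, V (insert b (S.erase s))) := by
    refine Finset.sum_congr rfl fun b hb => ?_
    have hbS : b ∉ S := by simpa using hb
    rw [Aplus, Finset.sum_insert hbS] -- sum over insert b S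
    congr 1
    · rw [Finset.erase_insert hbS]
    · refine Finset.sum_congr rfl fun s hs => ?_
      have : s ≠ b := fun h => hbS (h ▸ hs)
      rw [Finset.erase_insert_of_ne this.symm]
  have hR : Aplus N (Aminus N V) S
      = ∑ s ∈ S, (V S + ∑ b ∈ Sᶜ, V (insert b (S.erase s))) := by
    refine Finset.sum_congr rfl fun s hs => ?_
    rw [Aminus, Finset.compl_erase, Finset.sum_insert (by simpa using hs)]
    rw [Finset.insert_erase hs]
  rw [hL, hR, Finset.sum_add_distrib, Finset.sum_add_distrib, Finset.sum_comm,
    Finset.sum_const, Finset.sum_const, Finset.card_compl]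
  have h1 : S.card ≤ N := card_le_N S
  have : ((Fintype.card (Fin N) - S.card : ℕ) : ℝ) = (N : ℝ) - S.card := by
    rw [Fintype.card_fin]; push_cast [Nat.cast_sub h1]; ring
  simp only [nsmul_eq_mul, this]
  ring

lemma adjoint (N : ℕ) (V U : Finset (Fin N) → ℝ) :
    inner' N (Aminus N V) U = inner' N V (Aplus N U) := by
  unfold inner' Aminus Aplus
  simp only [Finset.sum_mul, Finset.mul_sum]
  rw [Finset.sum_sigma', Finset.sum_sigma']
  refine Finset.sum_bij' (fun p _ => ⟨insert p.2 p.1, p.2⟩)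
    (fun p _ => ⟨p.1.erase p.2, p.2⟩) ?_ ?_ ?_ ?_ ?_
  · intro p hp
    simp only [Finset.mem_sigma, Finset.mem_univ, true_and] at hp ⊢
    exact Finset.mem_insert_self _ _
  · intro p hp
    simp only [Finset.mem_sigma, Finset.mem_univ, true_and, Finset.mem_compl] at hp ⊢
    exact Finset.notMem_erase _ _
  · intro p hp
    simp only [Finset.mem_sigma, Finset.mem_univ, true_and, Finset.mem_compl] at hp
    simp [Finset.erase_insert hp]
  · intro p hp
    simp only [Finset.mem_sigma, Finset.mem_univ, true_and] at hp
    simp [Finset.insert_erase hp]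
  · intro p hp
    simp only [Finset.mem_sigma, Finset.mem_univ, true_and, Finset.mem_compl] at hp
    rw [Finset.erase_insert hp]

lemma aminus_W {N r : ℕ} {W : Finset (Fin N) → ℝ} (hW : memW N r W) :
    ∀ S, Aminus N W S = 0 := by
  rcases Nat.eq_zero_or_pos r with hr0 | hrpos
  · intro S
    refine Finset.sum_eq_zero fun b hb => hW.1 _ ?_
    rw [Finset.card_insert_of_notMem (by simpa using hb)]
    omega
  · have hsupp : suppOn N (r - 1) (Aminus N W) := by
      intro S hS
      refine Finset.sum_eq_zero fun b hb => hW.1 _ ?_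
      rw [Finset.card_insert_of_notMem (by simpa using hb)]
      omega
    have h0 : inner' N (Aminus N W) (Aminus N W) = 0 := by
      rw [adjoint]; exact hW.2 _ hsupp
    intro S
    have hsum : ∑ T : Finset (Fin N), Aminus N W T * Aminus N W T = 0 := h0
    have := Finset.sum_eq_zero_iff_of_nonneg
      (fun T _ => mul_self_nonneg (Aminus N W T)) |>.1 hsum S (Finset.mem_univ S)
    exact mul_self_eq_zero.1 this

lemma aplus_zero (N : ℕ) (Z : Finset (Fin N) → ℝ) (hZ : ∀ S, Z S = 0) :
    ∀ S, Aplus N Z S = 0 := fun S => Finset.sum_eq_zero fun s _ => hZ _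

lemma mcoef_zero (N r : ℕ) : mcoef N r 0 = (N : ℝ) - 2 * r := by
  simp [mcoef]

lemma mcoef_succ (N r k : ℕ) :
    mcoef N r (k + 1) = mcoef N r k + ((N : ℝ) - 2 * ((r : ℝ) + (k : ℝ) + 1)) := by
  rw [mcoef, mcoef, Finset.sum_range_succ]
  push_cast; ring

lemma aminus_iter {N r : ℕ} {W : Finset (Fin N) → ℝ} (hW : memW N r W) (j : ℕ) :
    ∀ S, Aminus N ((Aplus N)^[j] W) S
      = (if j = 0 then 0 else mcoef N r (j - 1)) * (Aplus N)^[j - 1] W S := by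
  induction j with
  | zero => intro S; simp [aminus_W hW S]
  | succ k ih =>
      intro S
      rw [Function.iterate_succ_apply', cop_pointwise]
      simp only [Nat.succ_sub_one, Nat.succ_ne_zero, if_false]
      rcases k with _ | k'
      · simp only [Function.iterate_zero, id] at *
        rw [aplus_zero N _ (aminus_W hW) S, mcoef_zero]
        by_cases hv : W S = 0
        · simp [hv]
        · have hcard : S.card = r := by
            by_contra h; exact hv (hW.1 S h)
          rw [hcard]; ring
      · have hAp : Aplus N (Aminus N ((Aplus N)^[k'+1] W)) S
            = mcoef N r k' * (Aplus N)^[k'+1] W S := by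
          have he : Aminus N ((Aplus N)^[k'+1] W)
              = fun S => mcoef N r k' * (Aplus N)^[k'] W S := by
            funext T
            simpa using ih T
          rw [he, aplus_scale]
          simp [← Function.iterate_succ_apply' (Aplus N)]
        rw [hAp]
        by_cases hv : (Aplus N)^[k'+1] W S = 0
        · rw [hv]; ring
        · have hcard : S.card = r + (k'+1) := by
            by_contra h; exact hv (suppOn_iter hW.1 (k'+1) S h)
          rw [hcard, mcoef_succ]
          push_cast; ring

lemma sqrt_two_mul_sqrt_two (a b : ℝ) (ha : 0 ≤ a) :
    Real.sqrt (2*a) * Real.sqrt (2*b) = 2 * Real.sqrt (a*b) := by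
  rw [← Real.sqrt_mul (by positivity), show 2*a*(2*b) = 4*(a*b) by ring,
    Real.sqrt_mul (by norm_num), show (4:ℝ) = 2^2 by norm_num,
    Real.sqrt_sq (by norm_num)]

lemma hbdo_eval (N : ℕ) (α β : ℝ) (k : ℕ) (V Vm : Finset (Fin N) → ℝ)
    (hV : suppOn N k V) (hVm : ∀ S : Finset (Fin N), S.card + 1 ≠ k → Vm S = 0)
    (hAm : ∀ S, Aminus N V S = Vm S) (S : Finset (Fin N)) :
    HBDO N α β V S = (2*(k:ℝ)*(α - (N:ℝ)) + β*(N:ℝ)) * V S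
      + (2*Real.sqrt ((k:ℝ)*((k:ℝ)+1)) - β) * Aplus N V S
      + (2*Real.sqrt ((k:ℝ)*((k:ℝ)-1)) - β) * Vm S := by
  have hT : Tdiag N V = fun R => Real.sqrt (2*(k:ℝ)) * V R := by
    funext R
    by_cases h : R.card = k
    · rw [Tdiag, h]
    · rw [Tdiag, hV R h]; ring
  have hLapS : ∀ T, Lap N (fun R => Real.sqrt (2*(k:ℝ)) * V R) T
      = Real.sqrt (2*(k:ℝ)) * Lap N V T := by
    intro T; rw [Lap, Lap, Adj, Adj, aplus_scale, aminus_scale]; ring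
  simp only [HBDO, hT]
  simp only [hLapS]
  simp only [Tdiag, Lap, Adj, hAm]
  have e1 : Real.sqrt (2*(S.card:ℝ)) * (Real.sqrt (2*(k:ℝ)) * V S) = 2*(k:ℝ) * V S := by
    by_cases h : V S = 0
    · rw [h]; ring
    · have hc : S.card = k := by by_contra hc; exact h (hV S hc)
      rw [hc, ← mul_assoc, Real.mul_self_sqrt (by positivity)]
  have e2 : Real.sqrt (2*(S.card:ℝ)) * Real.sqrt (2*(k:ℝ)) * Aplus N V S
      = 2 * Real.sqrt ((k:ℝ)*((k:ℝ)+1)) * Aplus N V S := by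
    by_cases h : Aplus N V S = 0
    · rw [h]; ring
    · have hc : S.card = k + 1 := by by_contra hc; exact h (suppOn_aplus hV S hc)
      rw [hc, sqrt_two_mul_sqrt_two _ _ (by positivity)]
      push_cast
      rw [show ((k:ℝ)+1)*(k:ℝ) = (k:ℝ)*((k:ℝ)+1) by ring]
  have e3 : Real.sqrt (2*(S.card:ℝ)) * Real.sqrt (2*(k:ℝ)) * Vm S
      = 2 * Real.sqrt ((k:ℝ)*((k:ℝ)-1)) * Vm S := by
    by_cases h : Vm S = 0
    · rw [h]; ring
    · have hc : S.card + 1 = k := by by_contra hc; exact h (hVm S hc)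
      have hck : (k:ℝ) - 1 = (S.card : ℝ) := by
        have : (k:ℝ) = (S.card:ℝ) + 1 := by exact_mod_cast hc.symm
        rw [this]; ring
      rw [sqrt_two_mul_sqrt_two _ _ (by positivity), hck,
        show (k:ℝ)*(S.card:ℝ) = (S.card:ℝ)*(k:ℝ) from mul_comm _ _]
  linear_combination (α - (N:ℝ)) * e1 + e2 + e3

lemma tdiag_add (N : ℕ) (V U : Finset (Fin N) → ℝ) :
    Tdiag N (fun T => V T + U T) = fun T => Tdiag N V T + Tdiag N U T := by
  funext T; simp [Tdiag]; ring

lemma aplus_add (N : ℕ) (V U : Finset (Fin N) → ℝ) :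
    Aplus N (fun T => V T + U T) = fun T => Aplus N V T + Aplus N U T := by
  funext T; simp [Aplus, Finset.sum_add_distrib]

lemma aminus_add (N : ℕ) (V U : Finset (Fin N) → ℝ) :
    Aminus N (fun T => V T + U T) = fun T => Aminus N V T + Aminus N U T := by
  funext T; simp [Aminus, Finset.sum_add_distrib]

lemma lap_add (N : ℕ) (V U : Finset (Fin N) → ℝ) (T : Finset (Fin N)) :
    Lap N (fun T => V T + U T) T = Lap N V T + Lap N U T := by
  simp only [Lap, Adj, aplus_add, aminus_add]; ring

lemma hbdo_add (N : ℕ) (α β : ℝ) (V U : Finset (Fin N) → ℝ) (S : Finset (Fin N)) :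
    HBDO N α β (fun T => V T + U T) S = HBDO N α β V S + HBDO N α β U S := by
  simp only [HBDO]
  rw [tdiag_add]
  have h1 : (fun T => α * (Tdiag N V T + Tdiag N U T)
        - Lap N (fun T => Tdiag N V T + Tdiag N U T) T)
      = fun T => (α * Tdiag N V T - Lap N (Tdiag N V) T)
        + (α * Tdiag N U T - Lap N (Tdiag N U) T) := by
    funext T
    rw [lap_add]
    ring
  rw [h1, tdiag_add, lap_add]
  ring

lemma hbdo_zero (N : ℕ) (α β : ℝ) (S : Finset (Fin N)) :
    HBDO N α β (fun _ => 0) S = 0 := by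
  have hz : Tdiag N (fun _ => 0) = fun _ => (0:ℝ) := by funext T; simp [Tdiag]
  have hlz : ∀ T, Lap N (fun _ => (0:ℝ)) T = 0 := by
    intro T; simp [Lap, Adj, Aplus, Aminus]
  simp only [HBDO, hz, hlz]
  simp [Tdiag, hlz]

lemma hbdo_smul (N : ℕ) (α β a : ℝ) (V : Finset (Fin N) → ℝ) (S : Finset (Fin N)) :
    HBDO N α β (fun T => a * V T) S = a * HBDO N α β V S := by
  have ht : ∀ U : Finset (Fin N) → ℝ, Tdiag N (fun T => a * U T) = fun T => a * Tdiag N U T := by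
    intro U; funext T; simp [Tdiag]; ring
  have hl : ∀ (U : Finset (Fin N) → ℝ) (T), Lap N (fun T => a * U T) T = a * Lap N U T := by
    intro U T; simp only [Lap, Adj, aplus_scale, aminus_scale]; ring
  simp only [HBDO, ht V]
  have h1 : (fun T => α * (a * Tdiag N V T) - Lap N (fun T => a * Tdiag N V T) T)
      = fun T => a * (α * Tdiag N V T - Lap N (Tdiag N V) T) := by
    funext T; rw [hl]; ring
  rw [h1, ht, hl]
  ring

lemma hbdo_sum (N : ℕ) (α β : ℝ) (t : Finset ℕ) (f : ℕ → Finset (Fin N) → ℝ)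
    (S : Finset (Fin N)) :
    HBDO N α β (fun T => ∑ j ∈ t, f j T) S = ∑ j ∈ t, HBDO N α β (f j) S := by
  induction t using Finset.cons_induction with
  | empty => simpa using hbdo_zero N α β S
  | cons a t ha ih =>
      have : (fun T => ∑ j ∈ Finset.cons a t ha, f j T)
          = fun T => f a T + ∑ j ∈ t, f j T := by
        funext T; rw [Finset.sum_cons]
      rw [this, hbdo_add, ih, Finset.sum_cons]

lemma shift_up (n : ℕ) (g v : ℕ → ℝ) (hv : v (n+1) = 0) :
    ∑ j ∈ Finset.range (n+1), g j * v (j+1)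
      = ∑ j ∈ Finset.range (n+1), (if j = 0 then 0 else g (j-1)) * v j := by
  rw [Finset.sum_range_succ, hv, mul_zero, add_zero]
  conv_rhs => rw [Finset.sum_range_succ']
  simp

lemma shift_down (n : ℕ) (p v : ℕ → ℝ) (hp0 : p 0 = 0) (hpn : p (n+1) = 0) :
    ∑ j ∈ Finset.range (n+1), p j * v (j-1)
      = ∑ j ∈ Finset.range (n+1), p (j+1) * v j := by
  rw [Finset.sum_range_succ' _ n, hp0, zero_mul, add_zero,
    Finset.sum_range_succ, hpn, zero_mul, add_zero]
  simp


/-- for `W ∈ W_r` and `V = Σ_{j=0}^{N−r} c_j·A₊^{j}W`,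
`HBDO V = Σ_{j=0}^{N−r} d_j·A₊^{j}W` with
`d_j = (2(r+j)(α−N)+βN)c_j + (2√((r+j)(r+j+1))−β)m(r,j)c_{j+1}
      + (2√((r+j)(r+j−1))−β)c_{j−1}`,
with conventions `c_{−1} = 0` and `c_{N−r+1} = 0` (here `c` vanishes beyond `N−r`). -/
theorem hbdo_coefficient_action (N : ℕ) (hN : 1 ≤ N) (α β : ℝ) (r : ℕ) (hr : r ≤ N)
    (W : Finset (Fin N) → ℝ) (hW : memW N r W)
    (c : ℕ → ℝ) (hc : ∀ j, N - r < j → c j = 0) :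
    HBDO N α β (∑ j ∈ Finset.range (N - r + 1), c j • (Aplus N)^[j] W)
      = ∑ j ∈ Finset.range (N - r + 1),
          ((2 * ((r : ℝ) + (j : ℝ)) * (α - (N : ℝ)) + β * (N : ℝ)) * c j
            + (2 * Real.sqrt (((r : ℝ) + (j : ℝ)) * ((r : ℝ) + (j : ℝ) + 1)) - β)
                * mcoef N r j * c (j + 1)
            + (2 * Real.sqrt (((r : ℝ) + (j : ℝ)) * ((r : ℝ) + (j : ℝ) - 1)) - β)
                * (if j = 0 then 0 else c (j - 1)))
          • (Aplus N)^[j] W := by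
  set n := N - r with hn
  have hVsum : (∑ j ∈ Finset.range (n + 1), c j • (Aplus N)^[j] W)
      = fun T => ∑ j ∈ Finset.range (n + 1), c j * (Aplus N)^[j] W T := by
    funext T; simp [Finset.sum_apply]
  rw [hVsum]
  funext S
  rw [show HBDO N α β (fun T => ∑ j ∈ Finset.range (n + 1), c j * (Aplus N)^[j] W T) S
      = ∑ j ∈ Finset.range (n + 1), HBDO N α β (fun T => c j * (Aplus N)^[j] W T) S
    from hbdo_sum N α β _ _ S]
  -- abbreviations
  set v : ℕ → ℝ := fun j => (Aplus N)^[j] W S with hvdef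
  set a : ℕ → ℝ := fun j => c j * (2*((r+j : ℕ):ℝ)*(α - (N:ℝ)) + β*(N:ℝ)) with hadef
  set b : ℕ → ℝ := fun j =>
    c j * (2*Real.sqrt (((r+j : ℕ):ℝ)*(((r+j : ℕ):ℝ)+1)) - β) with hbdef
  set p : ℕ → ℝ := fun j =>
    c j * (2*Real.sqrt (((r+j : ℕ):ℝ)*(((r+j : ℕ):ℝ)-1)) - β)
      * (if j = 0 then 0 else mcoef N r (j-1)) with hpdef
  have step1 : ∀ j ∈ Finset.range (n + 1),
      HBDO N α β (fun T => c j * (Aplus N)^[j] W T) S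
        = a j * v j + b j * v (j+1) + p j * v (j-1) := by
    intro j hj
    rw [hbdo_smul]
    rw [hbdo_eval N α β (r + j) ((Aplus N)^[j] W)
      (fun T => (if j = 0 then 0 else mcoef N r (j-1)) * (Aplus N)^[j-1] W T)
      (suppOn_iter hW.1 j)
      (by
        intro T hT
        rcases j with _ | k
        · simp
        · have : (Aplus N)^[k] W T = 0 := suppOn_iter hW.1 k T (by omega)
          simp [this])
      (aminus_iter hW j) S]
    simp only [hadef, hbdef, hpdef, hvdef]
    rw [← Function.iterate_succ_apply' (Aplus N) j W]
    ring
  rw [Finset.sum_congr rfl step1, Finset.sum_add_distrib, Finset.sum_add_distrib]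
  have hvtop : v (n + 1) = 0 := by
    simp only [hvdef]
    exact iter_vanish hW.1 (by omega) S
  have hp0 : p 0 = 0 := by simp [hpdef]
  have hpn : p (n + 1) = 0 := by
    simp only [hpdef]
    rw [hc (n+1) (by omega)]
    ring
  rw [shift_up n b v hvtop, shift_down n p v hp0 hpn,
    ← Finset.sum_add_distrib, ← Finset.sum_add_distrib]
  rw [show (∑ j ∈ Finset.range (n + 1),
        ((2 * ((r : ℝ) + (j : ℝ)) * (α - (N : ℝ)) + β * (N : ℝ)) * c j
          + (2 * Real.sqrt (((r : ℝ) + (j : ℝ)) * ((r : ℝ) + (j : ℝ) + 1)) - β)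
              * mcoef N r j * c (j + 1)
          + (2 * Real.sqrt (((r : ℝ) + (j : ℝ)) * ((r : ℝ) + (j : ℝ) - 1)) - β)
              * (if j = 0 then 0 else c (j - 1)))
        • (Aplus N)^[j] W) S
      = ∑ j ∈ Finset.range (n + 1),
        ((2 * ((r : ℝ) + (j : ℝ)) * (α - (N : ℝ)) + β * (N : ℝ)) * c j
          + (2 * Real.sqrt (((r : ℝ) + (j : ℝ)) * ((r : ℝ) + (j : ℝ) + 1)) - β)
              * mcoef N r j * c (j + 1)
          + (2 * Real.sqrt (((r : ℝ) + (j : ℝ)) * ((r : ℝ) + (j : ℝ) - 1)) - β)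
              * (if j = 0 then 0 else c (j - 1))) * v j
    from by simp [Finset.sum_apply, hvdef]]
  refine Finset.sum_congr rfl fun j hj => ?_
  simp only [hadef, hbdef, hpdef]
  rcases j with _ | k
  · simp only [if_pos rfl, Nat.cast_zero, Nat.add_zero, Nat.succ_sub_one,
      Nat.succ_ne_zero, if_neg (Nat.succ_ne_zero 0)]
    push_cast
    rw [show ((r:ℝ)+1)*((r:ℝ)+1-1) = ((r:ℝ)+0)*((r:ℝ)+0+1) by ring]
    ring
  · simp only [Nat.succ_sub_one, Nat.succ_ne_zero, if_neg (Nat.succ_ne_zero k), if_false]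
    push_cast
    rw [show ((r:ℝ)+((k:ℝ)+1+1))*((r:ℝ)+((k:ℝ)+1+1)-1)
        = ((r:ℝ)+((k:ℝ)+1))*((r:ℝ)+((k:ℝ)+1)+1) by ring]
    rw [show ((r:ℝ)+(k:ℝ))*((r:ℝ)+(k:ℝ)+1) = ((r:ℝ)+((k:ℝ)+1))*((r:ℝ)+((k:ℝ)+1)-1) by ring]
    ring
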